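/- Let K be a sesqui-analytic positive definite kernel on the unit ball 𝔹ᵐ ⊆ ℂᵐ normalized at the origin (K(z,0) = 1 for all z), and suppose B_m⁻¹·K is non-negative definite, where B_m(z,w) = 1/(1 − ⟨z,w⟩). Then K − B_m is a non-negative definite kernel on 𝔹ᵐ. -/

import Mathlib

/-!
Write `D z w = (1 - ⟪w, z⟫) K z w - 1`. The row-contractive kernel `B_m⁻¹ K` is non-negative
definite and identically `1` against the origin, so `D`, its Schur complement with respect to the
point `0`, is non-negative definite. Then `K - B_m = B_m D = ∑ₙ ⟪w, z⟫ⁿ D z w`, and every term is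
non-negative definite by the Schur product theorem, `⟪w, z⟫` being a Gram kernel; non-negative
definiteness survives pointwise convergent sums.
-/

open scoped ComplexOrder InnerProductSpace

/-- A scalar kernel on a set `s` is non-negative definite. -/
def IsNNDOn {X : Type*} (s : Set X) (K : X → X → ℂ) : Prop :=
  ∀ (p : ℕ) (x : Fin p → X), (∀ i, x i ∈ s) →
    Matrix.PosSemidef (Matrix.of fun i j : Fin p => K (x i) (x j))

/-- A scalar kernel on a set `s` is positive definite. -/
def IsPDOn {X : Type*} (s : Set X) (K : X → X → ℂ) : Prop :=
  ∀ (p : ℕ) (x : Fin p → X), (∀ i, x i ∈ s) → Function.Injective x →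
    Matrix.PosDef (Matrix.of fun i j : Fin p => K (x i) (x j))

/-- `K` is sesqui-analytic on `s`. -/
def Sesq {E : Type*} [NormedAddCommGroup E] [NormedSpace ℂ E] (s : Set E)
    (K : E → E → ℂ) : Prop :=
  (∀ w ∈ s, AnalyticOnNhd ℂ (fun z => K z w) s) ∧
    (∀ z ∈ s, AnalyticOnNhd ℂ (fun w => (starRingEnd ℂ) (K z w)) s)

open Matrix

theorem Matrix.PosSemidef.of_hasSum {ι β 𝕜 : Type*} [Fintype ι] [RCLike 𝕜]
    {M : β → Matrix ι ι 𝕜} {A : Matrix ι ι 𝕜} (hA : HasSum M A)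
    (hM : ∀ n, (M n).PosSemidef) : A.PosSemidef := by
  refine .of_dotProduct_mulVec_nonneg ?_ fun v => ?_
  · refine hA.star.unique ?_
    simpa only [star_eq_conjTranspose, (hM _).isHermitian.eq] using hA
  · let q : Matrix ι ι 𝕜 →+ 𝕜 :=
      { toFun := fun B => star v ⬝ᵥ B *ᵥ v
        map_zero' := by simp
        map_add' := fun B C => by simp [add_mulVec, dotProduct_add] }
    have hq : Continuous q := by
      show Continuous fun B : Matrix ι ι 𝕜 => star v ⬝ᵥ B *ᵥ v
      fun_prop
    exact (hA.map q hq).nonneg fun n => (hM n).dotProduct_mulVec_nonneg v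

section Kernel

variable {X : Type*} {s : Set X}

theorem IsNNDOn.posSemidef {K : X → X → ℂ} (hK : IsNNDOn s K) {ι : Type*} [Fintype ι]
    (x : ι → X) (hx : ∀ i, x i ∈ s) : (of fun i j => K (x i) (x j)).PosSemidef := by
  let e := Fintype.equivFin ι
  rw [← posSemidef_submatrix_equiv e.symm]
  exact hK _ (x ∘ e.symm) fun i => hx _

theorem IsNNDOn.conj_apply {K : X → X → ℂ} (hK : IsNNDOn s K) {z w : X} (hz : z ∈ s)
    (hw : w ∈ s) : starRingEnd ℂ (K z w) = K w z := by
  simpa using (hK 2 ![z, w] (by simp [Fin.forall_fin_two, hz, hw])).isHermitian.apply 1 0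

theorem isNNDOn_one : IsNNDOn s fun _ _ => 1 := by
  intro p x _
  simpa [vecMulVec] using posSemidef_vecMulVec_self_star (fun _ : Fin p => (1 : ℂ))

theorem IsNNDOn.mul {K L : X → X → ℂ} (hK : IsNNDOn s K) (hL : IsNNDOn s L) :
    IsNNDOn s fun z w => K z w * L z w :=
  fun p x hx => (hK p x hx).hadamard (hL p x hx)

theorem IsNNDOn.pow {K : X → X → ℂ} (hK : IsNNDOn s K) (n : ℕ) :
    IsNNDOn s fun z w => K z w ^ n := by
  induction n with
  | zero => simpa using isNNDOn_one
  | succ n ih => simpa only [pow_succ] using ih.mul hK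

theorem IsNNDOn.of_hasSum {β : Type*} {F : β → X → X → ℂ} {K : X → X → ℂ}
    (hF : ∀ n, IsNNDOn s (F n)) (hK : ∀ z ∈ s, ∀ w ∈ s, HasSum (fun n => F n z w) (K z w)) :
    IsNNDOn s K := fun p x hx =>
  PosSemidef.of_hasSum (M := fun n => of fun i j => F n (x i) (x j))
    (Pi.hasSum.2 fun i => Pi.hasSum.2 fun j => hK _ (hx i) _ (hx j)) fun n => hF n p x hx

/-- `(K (xᵢ) (xⱼ) - 1)ᵢⱼ` is the Schur complement of the `1 × 1` block `K z₀ z₀ = 1` in the matrix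
of `K` at the points `x₁, …, xₚ, z₀`. -/
theorem IsNNDOn.sub_one {K : X → X → ℂ} (hK : IsNNDOn s K) {z₀ : X} (hz₀ : z₀ ∈ s)
    (h : ∀ z ∈ s, K z z₀ = 1) : IsNNDOn s fun z w => K z w - 1 := by
  intro p x hx
  have h_symm : ∀ w ∈ s, K z₀ w = 1 := fun w hw => by
    rw [← hK.conj_apply hw hz₀, h w hw, map_one]
  have hext := hK.posSemidef (Sum.elim x fun _ : Unit => z₀) (by rintro (i | i) <;> simp [hx, hz₀])
  let J : Matrix (Fin p) Unit ℂ := of fun _ _ => 1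
  have hblocks : (of fun i j => K (Sum.elim x (fun _ : Unit => z₀) i)
      (Sum.elim x (fun _ : Unit => z₀) j)) = fromBlocks (of fun i j => K (x i) (x j)) J Jᴴ 1 := by
    ext (i | i) (j | j) <;> simp [J, h, h_symm, hx, hz₀]
  have : Invertible (1 : Matrix Unit Unit ℂ) := invertibleOne
  rw [hblocks, PosDef.fromBlocks₂₂ _ _ PosDef.one] at hext
  have hschur : (of fun i j => K (x i) (x j)) - J * (1 : Matrix Unit Unit ℂ)⁻¹ * Jᴴ =
      of fun i j => K (x i) (x j) - 1 := by
    ext i j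
    simp [J, mul_apply]
  rwa [hschur] at hext

end Kernel

theorem isNNDOn_inner {E : Type*} [SeminormedAddCommGroup E] [InnerProductSpace ℂ E] (s : Set E) :
    IsNNDOn s fun z w => ⟪w, z⟫_ℂ := fun p x _ => by
  simpa [transpose, gram] using (posSemidef_gram ℂ x).transpose

theorem norm_inner_lt_one_of_mem_ball {𝕜 E : Type*} [RCLike 𝕜] [SeminormedAddCommGroup E]
    [InnerProductSpace 𝕜 E] {z w : E} (hz : z ∈ Metric.ball 0 1) (hw : w ∈ Metric.ball 0 1) :
    ‖⟪z, w⟫_𝕜‖ < 1 := by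
  rw [mem_ball_zero_iff] at hz hw
  calc ‖⟪z, w⟫_𝕜‖ ≤ ‖z‖ * ‖w‖ := norm_inner_le_norm z w
    _ < 1 := mul_lt_one_of_nonneg_of_lt_one_left (norm_nonneg z) hz hw.le

theorem stmt_13_general (m : ℕ)
    (K : EuclideanSpace ℂ (Fin m) → EuclideanSpace ℂ (Fin m) → ℂ)
    (hnorm : ∀ z ∈ Metric.ball (0 : EuclideanSpace ℂ (Fin m)) 1, K z 0 = 1)
    (hrow : IsNNDOn (Metric.ball (0 : EuclideanSpace ℂ (Fin m)) 1)
      (fun z w => (1 - ⟪w, z⟫_ℂ) * K z w)) :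
    IsNNDOn (Metric.ball (0 : EuclideanSpace ℂ (Fin m)) 1)
      (fun z w => K z w - (1 - ⟪w, z⟫_ℂ)⁻¹) := by
  have hD := hrow.sub_one (Metric.mem_ball_self one_pos) fun z hz => by simp [hnorm z hz]
  refine .of_hasSum (fun n => ((isNNDOn_inner _).pow n).mul hD) fun z hz w hw => ?_
  have hwz := norm_inner_lt_one_of_mem_ball (𝕜 := ℂ) hw hz
  have hne : 1 - ⟪w, z⟫_ℂ ≠ 0 := sub_ne_zero.2 fun h => by simp [← h] at hwz
  have hsum := (hasSum_geometric_of_norm_lt_one hwz).mul_right ((1 - ⟪w, z⟫_ℂ) * K z w - 1)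
  rwa [mul_sub, inv_mul_cancel_left₀ hne, mul_one] at hsum

/-- Let `K` be a sesqui-analytic positive definite kernel on the unit ball `𝔹ᵐ ⊆ ℂᵐ`
normalized at the origin, and suppose `B_m⁻¹·K ⪰ 0`, where
`B_m(z,w) = 1/(1 − ⟨z,w⟩)` is the Drury–Arveson kernel.  Then `K − B_m ⪰ 0` on `𝔹ᵐ`. -/
theorem stmt_13 (m : ℕ)
    (K : EuclideanSpace ℂ (Fin m) → EuclideanSpace ℂ (Fin m) → ℂ)
    (hs : Sesq (Metric.ball (0 : EuclideanSpace ℂ (Fin m)) 1) K)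
    (hK : IsPDOn (Metric.ball (0 : EuclideanSpace ℂ (Fin m)) 1) K)
    (hnorm : ∀ z ∈ Metric.ball (0 : EuclideanSpace ℂ (Fin m)) 1, K z 0 = 1)
    (hrow : IsNNDOn (Metric.ball (0 : EuclideanSpace ℂ (Fin m)) 1)
      (fun z w => (1 - ⟪w, z⟫_ℂ) * K z w)) :
    IsNNDOn (Metric.ball (0 : EuclideanSpace ℂ (Fin m)) 1)
      (fun z w => K z w - (1 - ⟪w, z⟫_ℂ)⁻¹) :=
  stmt_13_general m K hnorm hrow
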